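/- Let A be a reduced commutative ring and let f, g ∈ A[x] be monic polynomials. Suppose that for every prime ideal p of A, the image of g in κ(p)[x] divides the image of f in κ(p)[x], where κ(p) is the residue field of A at p. Then g divides f in A[x]. -/

import Mathlib

/-!
Dividing by the monic `g` commutes with every base change, so the remainder `f %ₘ g` maps to the
remainder of `f` by `g` over each `κ(p)`, which vanishes by hypothesis. Hence every coefficient of
`f %ₘ g` lies in every prime of `A`, i.e. in the nilradical, which is zero since `A` is reduced.
-/

open Polynomial

theorem Ideal.ker_algebraMap_fractionRing_comp_quotientMk {A : Type*} [CommRing A]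
    (p : Ideal A) [p.IsPrime] :
    RingHom.ker ((algebraMap (A ⧸ p) (FractionRing (A ⧸ p))).comp (Ideal.Quotient.mk p)) = p := by
  rw [RingHom.ker_comp_of_injective _ (IsFractionRing.injective _ _), Ideal.mk_ker]

theorem eq_zero_of_forall_mem_of_isPrime {A : Type*} [CommRing A] [IsReduced A] {a : A}
    (h : ∀ p : Ideal A, p.IsPrime → a ∈ p) : a = 0 := by
  have ha : a ∈ nilradical A := by
    rw [nilradical_eq_sInf]
    exact Ideal.mem_sInf.2 h
  rwa [nilradical_eq_zero, Submodule.zero_eq_bot, Ideal.mem_bot] at ha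

theorem Polynomial.eq_zero_of_forall_map_fractionRing_quotient_eq_zero {A : Type*} [CommRing A]
    [IsReduced A] {q : A[X]}
    (h : ∀ (p : Ideal A) [p.IsPrime],
      q.map ((algebraMap (A ⧸ p) (FractionRing (A ⧸ p))).comp (Ideal.Quotient.mk p)) = 0) :
    q = 0 := by
  ext n
  refine eq_zero_of_forall_mem_of_isPrime fun p _ => ?_
  rw [← p.ker_algebraMap_fractionRing_comp_quotientMk, RingHom.mem_ker, ← coeff_map, h p,
    coeff_zero]

theorem stmt0_general {A : Type*} [CommRing A] [IsReduced A] (f g : Polynomial A)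
    (hg : g.Monic)
    (h : ∀ (p : Ideal A) [p.IsPrime],
      g.map ((algebraMap (A ⧸ p) (FractionRing (A ⧸ p))).comp (Ideal.Quotient.mk p)) ∣
        f.map ((algebraMap (A ⧸ p) (FractionRing (A ⧸ p))).comp (Ideal.Quotient.mk p))) :
    g ∣ f := by
  rw [← modByMonic_eq_zero_iff_dvd hg]
  refine eq_zero_of_forall_map_fractionRing_quotient_eq_zero fun p _ => ?_
  rw [map_modByMonic _ hg, modByMonic_eq_zero_iff_dvd (hg.map _)]
  exact h p

/-- **Lemma (division over reduced rings).** If `A` is reduced, `f, g ∈ A[x]` are monic,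
and for every prime `p` of `A` the image of `g` in `κ(p)[x]` divides the image of `f`,
then `g ∣ f` in `A[x]`. -/
theorem stmt0 {A : Type*} [CommRing A] [IsReduced A] (f g : Polynomial A)
    (hf : f.Monic) (hg : g.Monic)
    (h : ∀ (p : Ideal A) [p.IsPrime],
      g.map ((algebraMap (A ⧸ p) (FractionRing (A ⧸ p))).comp (Ideal.Quotient.mk p)) ∣
        f.map ((algebraMap (A ⧸ p) (FractionRing (A ⧸ p))).comp (Ideal.Quotient.mk p))) :
    g ∣ f :=
  stmt0_general f g hg h
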